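/- arXiv:2105.11523 — 3 statements merged into one kernel-verified Lean document; each statement's English description precedes it below -/
import Mathlib

section
/- Let A be Schur stable with Aᵀ P A − P = −I, P ⪰ I, and consider x(k+1) = A x(k) + g(x(k)) with ‖g(x)‖ ≤ ‖B‖·δ·‖x‖. If δ satisfies λ_max(P)‖B‖²δ² + 2 λ_max(P)‖A‖‖B‖δ ≤ 1/2, then V(x) = xᵀ P x satisfies V(x(k+1)) − V(x(k)) ≤ −(1/2)‖x(k)‖² along trajectories. -/
open Matrix

def SchurStable {n : ℕ} (A : Matrix (Fin n) (Fin n) ℝ) : Prop :=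
  ∀ μ ∈ spectrum ℂ (A.map (Complex.ofReal)), ‖μ‖ < 1

noncomputable def opNorm {m n : ℕ} (K : Matrix (Fin m) (Fin n) ℝ) : ℝ :=
  ‖LinearMap.toContinuousLinearMap (Matrix.toEuclideanLin K)‖

open Matrix
open scoped RealInnerProductSpace

lemma toEuclideanLin_eigen {n : ℕ} {P : Matrix (Fin n) (Fin n) ℝ} (hP : P.IsHermitian)
    (i : Fin n) :
    Matrix.toEuclideanLin P (hP.eigenvectorBasis i) =
      hP.eigenvalues i • hP.eigenvectorBasis i := by
  have h := hP.mulVec_eigenvectorBasis i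
  ext j
  have := congrFun h j
  simpa [Matrix.toEuclideanLin_apply] using this

lemma norm_PL_le {n : ℕ} (hn : 0 < n) {P : Matrix (Fin n) (Fin n) ℝ}
    (hP : P.IsHermitian) (hpsd : P.PosSemidef) (v : EuclideanSpace ℝ (Fin n)) :
    ‖Matrix.toEuclideanLin P v‖ ≤ (⨆ i, hP.eigenvalues i) * ‖v‖ := by
  have : Nonempty (Fin n) := ⟨⟨0, hn⟩⟩
  set lam := ⨆ i, hP.eigenvalues i with hlam
  have hnn : ∀ i, 0 ≤ hP.eigenvalues i := fun i => hpsd.eigenvalues_nonneg i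
  have hle : ∀ i, hP.eigenvalues i ≤ lam := fun i =>
    le_ciSup (Set.Finite.bddAbove (Set.finite_range _)) i
  have hlam0 : 0 ≤ lam := le_trans (hnn ⟨0, hn⟩) (hle ⟨0, hn⟩)
  set b := hP.eigenvectorBasis
  have hsym := (Matrix.isHermitian_iff_isSymmetric.mp hP)
  have hinner : ∀ i, ⟪b i, Matrix.toEuclideanLin P v⟫ = hP.eigenvalues i * ⟪b i, v⟫ := by
    intro i
    rw [← hsym (b i) v, toEuclideanLin_eigen hP i, inner_smul_left]
    simp
    left; rfl
  have hsq : ‖Matrix.toEuclideanLin P v‖ ^ 2 ≤ (lam * ‖v‖) ^ 2 := by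
    have h1 : ‖Matrix.toEuclideanLin P v‖ ^ 2 =
        ∑ i, (hP.eigenvalues i * ⟪b i, v⟫) ^ 2 := by
      have := b.sum_inner_mul_inner (Matrix.toEuclideanLin P v) (Matrix.toEuclideanLin P v)
      rw [real_inner_self_eq_norm_sq] at this
      rw [← this]
      refine Finset.sum_congr rfl fun i _ => ?_
      rw [real_inner_comm (b i) (Matrix.toEuclideanLin P v), hinner i]; ring
    have h2 : ‖v‖ ^ 2 = ∑ i, ⟪b i, v⟫ ^ 2 := by
      have := b.sum_inner_mul_inner v v
      rw [real_inner_self_eq_norm_sq] at this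
      rw [← this]
      refine Finset.sum_congr rfl fun i _ => ?_
      rw [real_inner_comm (b i) v]; ring
    rw [h1, mul_pow, h2, Finset.mul_sum]
    refine Finset.sum_le_sum fun i _ => ?_
    have : (hP.eigenvalues i)^2 ≤ lam ^2 := by
      have := hle i; have := hnn i; nlinarith
    nlinarith [sq_nonneg (⟪b i, v⟫ : ℝ)]
  have h0 : (0:ℝ) ≤ lam * ‖v‖ := mul_nonneg hlam0 (norm_nonneg v)
  nlinarith [norm_nonneg (Matrix.toEuclideanLin P v)]

set_option maxHeartbeats 1000000 in
/-- Lyapunov decrease along perturbed trajectories: if `AᵀPA − P = −I`, `P ⪰ I`,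
`x(k+1) = A x(k) + g(x(k))` with `‖g(x)‖ ≤ ‖B‖ δ ‖x‖`, and `δ` is small enough, then
`V(x) = xᵀ P x` decreases by at least `(1/2)‖x(k)‖²` at each step. -/
theorem lyapunov_decrease_perturbed {n m : ℕ} (hn : 0 < n)
    (A P : Matrix (Fin n) (Fin n) ℝ) (B : Matrix (Fin n) (Fin m) ℝ)
    (hA : SchurStable A) (hP : P.IsHermitian) (hPI : (P - 1).PosSemidef)
    (hLyap : Aᵀ * P * A - P = -1)
    (δ : ℝ) (hδ : 0 ≤ δ)
    (hδsmall : (⨆ i, hP.eigenvalues i) * opNorm B ^ 2 * δ ^ 2 +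
        2 * (⨆ i, hP.eigenvalues i) * opNorm A * opNorm B * δ ≤ 1 / 2)
    (g : EuclideanSpace ℝ (Fin n) → EuclideanSpace ℝ (Fin n))
    (hg : ∀ y, ‖g y‖ ≤ opNorm B * δ * ‖y‖)
    (x : ℕ → EuclideanSpace ℝ (Fin n))
    (hdyn : ∀ k, x (k + 1) = Matrix.toEuclideanLin A (x k) + g (x k))
    (V : EuclideanSpace ℝ (Fin n) → ℝ)
    (hV : ∀ y, V y = inner ℝ y (Matrix.toEuclideanLin P y)) :
    ∀ k, V (x (k + 1)) - V (x k) ≤ -(1 / 2) * ‖x k‖ ^ 2 := by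
  intro k
  have hpsd : P.PosSemidef := by
    have h1 : (P - 1) + 1 = P := sub_add_cancel P 1
    have := hPI.add (Matrix.PosSemidef.one (n := Fin n) (R := ℝ))
    rwa [h1] at this
  set lam := ⨆ i, hP.eigenvalues i with hlam
  have hlam0 : 0 ≤ lam := by
    have hnn : (0:ℝ) ≤ hP.eigenvalues ⟨0, hn⟩ := hpsd.eigenvalues_nonneg _
    exact le_trans hnn (le_ciSup (Set.Finite.bddAbove (Set.finite_range _)) _)
  set PL := Matrix.toEuclideanLin P with hPL
  set AL := Matrix.toEuclideanLin A with hAL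
  set y := x k with hy
  set u := AL y with hu
  set w := g y with hw
  have hPLle : ∀ v, ‖PL v‖ ≤ lam * ‖v‖ := fun v => norm_PL_le hn hP hpsd v
  have hsym := (Matrix.isHermitian_iff_isSymmetric.mp hP)
  -- norms
  have ha0 : 0 ≤ opNorm A := norm_nonneg _
  have hb0 : 0 ≤ opNorm B := norm_nonneg _
  have hAle : ‖u‖ ≤ opNorm A * ‖y‖ := by
    have h := ContinuousLinearMap.le_opNorm
      (LinearMap.toContinuousLinearMap (Matrix.toEuclideanLin A)) y
    rw [LinearMap.coe_toContinuousLinearMap'] at h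
    exact h
  have hgle : ‖w‖ ≤ opNorm B * δ * ‖y‖ := hg y
  -- expand V
  have hexp : V (x (k+1)) = ⟪u, PL u⟫ + 2 * ⟪w, PL u⟫ + ⟪w, PL w⟫ := by
    rw [hV, hdyn k]
    have : ⟪u, PL w⟫ = ⟪w, PL u⟫ := by
      rw [← hsym u w, real_inner_comm]
    simp only [map_add, inner_add_left, inner_add_right, ← hu, ← hw, ← hy]
    rw [this]; ring
  -- Lyapunov: ⟪u, PL u⟫ = ⟪y, PL y⟫ - ‖y‖^2
  have hAtPA : Aᵀ * P * A = P - 1 := by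
    rw [sub_eq_iff_eq_add] at hLyap
    rw [hLyap]; abel
  have hlyap2 : ⟪u, PL u⟫ = ⟪y, PL y⟫ - ‖y‖^2 := by
    have hadj : ⟪u, PL u⟫ = ⟪y, Matrix.toEuclideanLin (Aᵀ * P * A) y⟫ := by
      have h1 : Matrix.toEuclideanLin (Aᵀ * P * A) y = Matrix.toEuclideanLin Aᵀ (PL (AL y)) := by
        simp [hPL, hAL, Matrix.toEuclideanLin_apply, Matrix.mulVec_mulVec, Matrix.mul_assoc]
      have h2 : Matrix.toEuclideanLin Aᵀ = LinearMap.adjoint AL := by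
        rw [hAL, ← Matrix.toEuclideanLin_conjTranspose_eq_adjoint,
          Matrix.conjTranspose_eq_transpose_of_trivial]
      rw [h1, h2, LinearMap.adjoint_inner_right]
    rw [hadj, hAtPA]
    have : Matrix.toEuclideanLin (P - 1) y = PL y - y := by
      simp [hPL, Matrix.toEuclideanLin_apply, Matrix.sub_mulVec]
    rw [this, inner_sub_right, real_inner_self_eq_norm_sq]
  -- bounds
  have hcross : ⟪w, PL u⟫ ≤ lam * opNorm A * opNorm B * δ * ‖y‖^2 := by
    calc ⟪w, PL u⟫ ≤ ‖w‖ * ‖PL u‖ := real_inner_le_norm _ _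
    _ ≤ (opNorm B * δ * ‖y‖) * (lam * (opNorm A * ‖y‖)) := by
        apply mul_le_mul hgle _ (norm_nonneg _) (by positivity)
        exact le_trans (hPLle u) (by nlinarith [norm_nonneg u])
    _ = lam * opNorm A * opNorm B * δ * ‖y‖^2 := by ring
  have hquad : ⟪w, PL w⟫ ≤ lam * opNorm B ^2 * δ^2 * ‖y‖^2 := by
    calc ⟪w, PL w⟫ ≤ ‖w‖ * ‖PL w‖ := real_inner_le_norm _ _
    _ ≤ (opNorm B * δ * ‖y‖) * (lam * (opNorm B * δ * ‖y‖)) := by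
        apply mul_le_mul hgle _ (norm_nonneg _) (by positivity)
        exact le_trans (hPLle w) (by nlinarith [norm_nonneg w])
    _ = lam * opNorm B ^2 * δ^2 * ‖y‖^2 := by ring
  have hVy : V y = ⟪y, PL y⟫ := hV y
  rw [hexp, hVy]
  have hy2 : (0:ℝ) ≤ ‖y‖^2 := sq_nonneg _
  nlinarith [mul_le_mul_of_nonneg_right hδsmall hy2]
end

section
/- Let a sequence x(k) in ℝⁿ satisfy ‖x(k+1)‖ ≤ C ‖x(k)‖ for k ∈ [k_s, k_s+T−1] and ‖x(k_s+t)‖ ≤ φ α^{t−T} ‖x(k_s+T)‖ for t ∈ [T+1, k_{s+1}−k_s], where C ≥ 1, φ ≥ 1, 0 < α < 1. Then with μ := φ (C/α)^T, for any λ with α < λ < 1 and dwell time τ := min_s (k_{s+1}−k_s) satisfying τ > ln(μ)/ln(λ/α), one has ‖x(k_s+t)‖ ≤ μ λ^{k_s+t−k_0} ‖x(k_0)‖ for all s ≥ 0 and t ∈ [1, k_{s+1}−k_s]. -/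
/-- Exponential stability under slow switching: a trajectory growing with rate `C` during
the first `T` steps of each switching interval and decaying at rate `α` (with overshoot `φ`)
afterwards is exponentially bounded with rate `λ` and overshoot `μ = φ(C/α)^T`, provided the
dwell time `τ` satisfies `τ > ln(μ)/ln(λ/α)`. -/
theorem exp_stability_slow_switching {n : ℕ} (T τ : ℕ)
    (x : ℕ → EuclideanSpace ℝ (Fin n))
    (C φ α lam : ℝ) (hC : 1 ≤ C) (hφ : 1 ≤ φ)
    (hα0 : 0 < α) (hαlam : α < lam) (hlam1 : lam < 1)
    (ks : ℕ → ℕ) (hks0 : ks 0 = 0) (hksmono : StrictMono ks)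
    (hτT : T < τ) (hdwellτ : ∀ s : ℕ, τ ≤ ks (s + 1) - ks s)
    (hdwell : Real.log (φ * (C / α) ^ T) / Real.log (lam / α) < (τ : ℝ))
    (hgrow : ∀ s k : ℕ, ks s ≤ k → k ≤ ks s + T - 1 → ‖x (k + 1)‖ ≤ C * ‖x k‖)
    (hdecay : ∀ s t : ℕ, T + 1 ≤ t → t ≤ ks (s + 1) - ks s →
        ‖x (ks s + t)‖ ≤ φ * α ^ (t - T) * ‖x (ks s + T)‖) :
    ∀ s t : ℕ, 1 ≤ t → t ≤ ks (s + 1) - ks s →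
        ‖x (ks s + t)‖ ≤ (φ * (C / α) ^ T) * lam ^ (ks s + t) * ‖x 0‖ := by
  have hα1 : α < 1 := hαlam.trans hlam1
  have hlam0 : 0 < lam := hα0.trans hαlam
  have hαne : α ≠ 0 := hα0.ne'
  set μ := φ * (C / α) ^ T with hμdef
  have hCα : 1 ≤ C / α := (one_le_div hα0).2 (hα1.le.trans hC)
  have hμ1 : 1 ≤ μ := by
    have h1 : (1:ℝ) ≤ (C / α) ^ T := one_le_pow₀ hCα
    nlinarith
  have hμpos : 0 < μ := lt_of_lt_of_le one_pos hμ1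
  -- growth bound inside first T steps
  have hgrow' : ∀ s t : ℕ, t ≤ T → ‖x (ks s + t)‖ ≤ C ^ t * ‖x (ks s)‖ := by
    intro s t htT
    induction t with
    | zero => simp
    | succ t ih =>
      have ht : t ≤ T := Nat.le_of_succ_le htT
      have h1 : ‖x (ks s + t + 1)‖ ≤ C * ‖x (ks s + t)‖ := by
        apply hgrow s (ks s + t) (Nat.le_add_right _ _)
        omega
      calc ‖x (ks s + (t + 1))‖ = ‖x (ks s + t + 1)‖ := by ring_nf
        _ ≤ C * ‖x (ks s + t)‖ := h1
        _ ≤ C * (C ^ t * ‖x (ks s)‖) :=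
            mul_le_mul_of_nonneg_left (ih ht) (by linarith)
        _ = C ^ (t + 1) * ‖x (ks s)‖ := by ring
  -- intra-interval bound
  have hintra : ∀ s t : ℕ, t ≤ ks (s + 1) - ks s →
      ‖x (ks s + t)‖ ≤ μ * α ^ t * ‖x (ks s)‖ := by
    intro s t ht
    by_cases htT : t ≤ T
    · calc ‖x (ks s + t)‖ ≤ C ^ t * ‖x (ks s)‖ := hgrow' s t htT
        _ ≤ μ * α ^ t * ‖x (ks s)‖ := by
          apply mul_le_mul_of_nonneg_right _ (norm_nonneg _)
          have h1 : C ^ t ≤ C ^ T := pow_le_pow_right₀ hC htT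
          have h2 : α ^ T ≤ α ^ t := pow_le_pow_of_le_one hα0.le hα1.le htT
          have h3 : (0:ℝ) < α ^ T := pow_pos hα0 T
          have h4 : (0:ℝ) < C ^ T := pow_pos (by linarith) T
          have heq : μ * α ^ t = φ * (C ^ T * (α ^ t / α ^ T)) := by
            rw [hμdef, div_pow]; field_simp
          rw [heq]
          have h5 : (1:ℝ) ≤ α ^ t / α ^ T := (one_le_div h3).2 h2
          calc C ^ t ≤ C ^ T := h1
            _ = C ^ T * 1 := by ring
            _ ≤ C ^ T * (α ^ t / α ^ T) := mul_le_mul_of_nonneg_left h5 h4.le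
            _ ≤ φ * (C ^ T * (α ^ t / α ^ T)) :=
                le_mul_of_one_le_left (by positivity) hφ
    · push_neg at htT
      have hT1 : T + 1 ≤ t := htT
      have hd := hdecay s t hT1 ht
      have hxT : ‖x (ks s + T)‖ ≤ C ^ T * ‖x (ks s)‖ := hgrow' s T le_rfl
      calc ‖x (ks s + t)‖ ≤ φ * α ^ (t - T) * ‖x (ks s + T)‖ := hd
        _ ≤ φ * α ^ (t - T) * (C ^ T * ‖x (ks s)‖) :=
            mul_le_mul_of_nonneg_left hxT (by positivity)
        _ = μ * α ^ t * ‖x (ks s)‖ := by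
            have hpow : α ^ t = α ^ T * α ^ (t - T) := by
              rw [← pow_add]; congr 1; omega
            rw [hμdef, hpow, div_pow]
            field_simp
  -- dwell-time inequality
  have hlamα1 : 1 < lam / α := (one_lt_div hα0).2 hαlam
  have hμlt : μ < (lam / α) ^ τ := by
    have hlogpos : 0 < Real.log (lam / α) := Real.log_pos hlamα1
    have hlog : Real.log μ < (τ : ℝ) * Real.log (lam / α) := by
      have := mul_lt_mul_of_pos_right hdwell hlogpos
      rwa [div_mul_cancel₀ _ hlogpos.ne'] at this
    have h2 : Real.log μ < Real.log ((lam / α) ^ τ) := by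
      rwa [Real.log_pow]
    exact (Real.log_lt_log_iff hμpos (pow_pos (by positivity) τ)).1 h2
  have hkey : ∀ m : ℕ, τ ≤ m → μ * α ^ m ≤ lam ^ m := by
    intro m hm
    have h1 : μ ≤ (lam / α) ^ m :=
      hμlt.le.trans (pow_le_pow_right₀ hlamα1.le hm)
    calc μ * α ^ m ≤ (lam / α) ^ m * α ^ m :=
          mul_le_mul_of_nonneg_right h1 (pow_nonneg hα0.le m)
      _ = lam ^ m := by rw [div_pow]; field_simp
  -- switching-instant bound by induction
  have hB : ∀ s, ‖x (ks s)‖ ≤ lam ^ (ks s) * ‖x 0‖ := by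
    intro s
    induction s with
    | zero => simp [hks0]
    | succ s ih =>
      have hΔ : ks s ≤ ks (s + 1) := (hksmono (Nat.lt_succ_self s)).le
      have heq : ks s + (ks (s + 1) - ks s) = ks (s + 1) := by omega
      calc ‖x (ks (s + 1))‖ = ‖x (ks s + (ks (s + 1) - ks s))‖ := by rw [heq]
        _ ≤ μ * α ^ (ks (s + 1) - ks s) * ‖x (ks s)‖ := hintra s _ le_rfl
        _ ≤ lam ^ (ks (s + 1) - ks s) * ‖x (ks s)‖ :=
            mul_le_mul_of_nonneg_right (hkey _ (hdwellτ s)) (norm_nonneg _)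
        _ ≤ lam ^ (ks (s + 1) - ks s) * (lam ^ (ks s) * ‖x 0‖) :=
            mul_le_mul_of_nonneg_left ih (by positivity)
        _ = lam ^ (ks (s + 1)) * ‖x 0‖ := by
            rw [← mul_assoc, ← pow_add]
            congr 2
            omega
  -- conclusion
  intro s t ht1 ht2
  calc ‖x (ks s + t)‖ ≤ μ * α ^ t * ‖x (ks s)‖ := hintra s t ht2
    _ ≤ μ * α ^ t * (lam ^ (ks s) * ‖x 0‖) :=
        mul_le_mul_of_nonneg_left (hB s) (by positivity)
    _ ≤ μ * lam ^ t * (lam ^ (ks s) * ‖x 0‖) := by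
        have h1 : α ^ t ≤ lam ^ t := pow_le_pow_left₀ hα0.le hαlam.le t
        have h2 : (0:ℝ) ≤ lam ^ (ks s) * ‖x 0‖ := by positivity
        exact mul_le_mul_of_nonneg_right
          (mul_le_mul_of_nonneg_left h1 hμpos.le) h2
    _ = μ * lam ^ (ks s + t) * ‖x 0‖ := by rw [pow_add]; ring
end

section
/- Let C ≥ 1, φ ≥ 1, 0 < α < λ < 1, μ = φ(C/α)^T, and suppose switching instants satisfy k_s − k_0 ≥ s τ with τ > ln(μ)/ln(λ/α). Then for all s ≥ 0 and t ∈ [1, T]: C^t α^{k_s−k_0} μ^s ≤ μ λ^{k_s+t−k_0}. -/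
/-- The bound used during the first `T` steps of a switching interval:
`C^t α^{k_s−k_0} μ^s ≤ μ λ^{k_s+t−k_0}` for `t ∈ [1, T]`, under the dwell-time condition. -/
theorem transient_bound {T : ℕ} (hT : 0 < T)
    (C φ α lam τ : ℝ) (hC : 1 ≤ C) (hφ : 1 ≤ φ)
    (hα0 : 0 < α) (hαlam : α < lam) (hlam1 : lam < 1)
    (hτ : Real.log (φ * (C / α) ^ T) / Real.log (lam / α) < τ)
    (s : ℕ) (k0 ks : ℤ) (hk : (s : ℝ) * τ ≤ ((ks - k0 : ℤ) : ℝ))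
    (t : ℕ) (ht1 : 1 ≤ t) (htT : t ≤ T) :
    C ^ t * α ^ (ks - k0) * (φ * (C / α) ^ T) ^ s ≤
      (φ * (C / α) ^ T) * lam ^ (ks + (t : ℤ) - k0) := by
  have hlam0 : 0 < lam := hα0.trans hαlam
  have hC0 : (0:ℝ) < C := lt_of_lt_of_le one_pos hC
  have hφ0 : (0:ℝ) < φ := lt_of_lt_of_le one_pos hφ
  have hμ0 : (0:ℝ) < φ * (C/α)^T := by positivity
  have hL0 : (0:ℝ) < C ^ t * α ^ (ks - k0) * (φ * (C / α) ^ T) ^ s := by positivity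
  have hR0 : (0:ℝ) < (φ * (C / α) ^ T) * lam ^ (ks + (t : ℤ) - k0) := by positivity
  rw [← Real.log_le_log_iff hL0 hR0]
  have hlα : Real.log α < Real.log lam := Real.log_lt_log hα0 hαlam
  have hllam : Real.log lam < 0 := Real.log_neg hlam0 hlam1
  have hlC : 0 ≤ Real.log C := Real.log_nonneg hC
  have hlφ : 0 ≤ Real.log φ := Real.log_nonneg hφ
  have hratio : Real.log (lam / α) = Real.log lam - Real.log α :=
    Real.log_div (ne_of_gt hlam0) (ne_of_gt hα0)
  have hratio0 : 0 < Real.log lam - Real.log α := by linarith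
  have hlμ : Real.log (φ * (C/α)^T) =
      Real.log φ + (T:ℝ) * (Real.log C - Real.log α) := by
    rw [Real.log_mul (ne_of_gt hφ0) (by positivity), Real.log_pow,
      Real.log_div (ne_of_gt hC0) (ne_of_gt hα0)]
  have hτ' : Real.log (φ * (C/α)^T) ≤ τ * (Real.log lam - Real.log α) := by
    rw [← hratio]
    have := (div_lt_iff₀ (by rw [hratio]; exact hratio0)).mp hτ
    linarith
  set d : ℝ := ((ks - k0 : ℤ) : ℝ) with hd
  have hs1 : (s:ℝ) * Real.log (φ * (C/α)^T) ≤ ((s:ℝ) * τ) * (Real.log lam - Real.log α) := by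
    rw [mul_assoc]
    exact mul_le_mul_of_nonneg_left hτ' (Nat.cast_nonneg s)
  have hs2 : ((s:ℝ) * τ) * (Real.log lam - Real.log α) ≤ d * (Real.log lam - Real.log α) :=
    mul_le_mul_of_nonneg_right hk (le_of_lt hratio0)
  have hA : (t:ℝ) * Real.log C ≤ (T:ℝ) * Real.log C :=
    mul_le_mul_of_nonneg_right (by exact_mod_cast htT) hlC
  have hB : (t:ℝ) * (-Real.log lam) ≤ (T:ℝ) * (-Real.log α) :=
    mul_le_mul (by exact_mod_cast htT) (by linarith) (by linarith) (Nat.cast_nonneg T)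
  rw [Real.log_mul (ne_of_gt (by positivity)) (ne_of_gt (by positivity)),
    Real.log_mul (ne_of_gt (by positivity)) (ne_of_gt (by positivity)),
    Real.log_mul (ne_of_gt hμ0) (ne_of_gt (by positivity)),
    Real.log_pow, Real.log_pow, Real.log_zpow, Real.log_zpow, hlμ]
  rw [hlμ] at hs1
  have hdcast : d = (ks:ℝ) - (k0:ℝ) := by rw [hd]; push_cast; ring
  push_cast
  nlinarith [hs1, hs2, hA, hB, hdcast]
end
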